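/- arXiv:1705.07987 — 6 statements merged into one kernel-verified Lean document; each statement's English description precedes it below -/
import Mathlib

section
/- Let $S$ be a random vector in $[-\infty,0]^d$ with $\max(S_1,\ldots,S_d) = 0$ almost surely, and let $E$ be a unit exponential random variable independent of $S$. Then for every $z \in \mathbb{R}^d$ with $\max(z) > 0$, $P[S + E \le z] = E[e^{\max(S - (z \wedge 0))}] - E[e^{\max(S - z)}]$, where $z \wedge 0$ denotes the componentwise minimum with $0$. -/
/-!
With `M = max (S - z)`, the event `S + E ≤ z` is `M ≤ -E`. For a fixed `m ∈ [-∞, ∞]` and a unit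
exponential `E`, `P[m ≤ -E] = e^{m ∨ 0} - e^m`; since `M` is a function of `S`, it is independent
of `E`, so `P[S + E ≤ z] = E[e^{M ∨ 0}] - E[e^M]`. On `max S = 0` one has
`max (S - (z ∧ 0)) = M ∨ 0`, and `e^M ≤ e^{max (-z)}` makes the subtracted integral finite.
-/

open MeasureTheory ProbabilityTheory Set

namespace EReal

lemma sub_coe_min (a : EReal) (b c : ℝ) : a - ↑(min b c) = (a - b) ⊔ (a - c) := by
  rcases le_total b c with h | h
  · rw [min_eq_left h, sup_eq_left.mpr (sub_le_sub le_rfl (by exact_mod_cast h))]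
  · rw [min_eq_right h, sup_eq_right.mpr (sub_le_sub le_rfl (by exact_mod_cast h))]

lemma measurable_sub_coe (c : ℝ) : Measurable fun x : EReal => x - c :=
  Monotone.measurable fun _ _ h => sub_le_sub h le_rfl

lemma add_coe_le_coe_iff_sub_le (s : EReal) (e z : ℝ) : s + e ≤ z ↔ s - z ≤ ↑(-e) := by
  induction s with
  | bot => simp
  | coe x =>
    norm_cast
    constructor <;> intro h <;> linarith
  | top => simp [top_add_of_ne_bot (coe_ne_bot e)]

lemma iSup_sub_coe_min_zero {ι : Type*} {s : ι → EReal} (hs : ⨆ i, s i = 0) (z : ι → ℝ) :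
    ⨆ i, s i - ↑(min (z i) 0) = (⨆ i, s i - z i) ⊔ 0 := by
  simp only [sub_coe_min, iSup_sup_eq, coe_zero, sub_zero, hs]

end EReal

lemma measure_le_neg_eq_exp_sup_sub_exp {ν : Measure ℝ} [IsProbabilityMeasure ν]
    (hν : ∀ t : ℝ, 0 ≤ t → ν (Ioi t) = ENNReal.ofReal (Real.exp (-t))) (m : EReal) :
    ν {e | m ≤ ↑(-e)} = EReal.exp (m ⊔ 0) - EReal.exp m := by
  induction m with
  | bot => simp
  | top => simp
  | coe r =>
    have hset : {e : ℝ | (r : EReal) ≤ ↑(-e)} = (Ioi (-r))ᶜ := by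
      ext e
      simp only [mem_ofPred_eq, EReal.coe_le_coe_iff, mem_compl_iff, mem_Ioi, not_lt]
      constructor <;> intro h <;> linarith
    rw [hset]
    rcases le_or_gt r 0 with hr | hr
    · rw [prob_compl_eq_one_sub measurableSet_Ioi, hν _ (neg_nonneg.mpr hr), neg_neg,
        sup_eq_right.mpr (EReal.coe_nonpos.mpr hr)]
      simp
    · have hzero : ν (Ioi 0)ᶜ = 0 := by
        rw [prob_compl_eq_one_sub measurableSet_Ioi, hν 0 le_rfl]
        simp
      rw [sup_eq_left.mpr (EReal.coe_nonneg.mpr hr.le), tsub_self]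
      exact measure_mono_null (compl_subset_compl.mpr (Ioi_subset_Ioi (by linarith))) hzero

namespace ProbabilityTheory.IndepFun

variable {Ω α β : Type*} [MeasurableSpace Ω] [MeasurableSpace α] [MeasurableSpace β]
  {μ : Measure Ω}

lemma measure_preimage_eq_lintegral [IsFiniteMeasure μ] {X : Ω → α} {Y : Ω → β} (h : IndepFun X Y μ)
    (hX : Measurable X) (hY : Measurable Y) {s : Set (α × β)} (hs : MeasurableSet s) :
    μ ((fun ω => (X ω, Y ω)) ⁻¹' s) = ∫⁻ ω, μ.map Y (Prod.mk (X ω) ⁻¹' s) ∂μ := by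
  rw [← Measure.map_apply (hX.prodMk hY) hs,
    (indepFun_iff_map_prod_eq_prod_map_map hX.aemeasurable hY.aemeasurable).mp h,
    Measure.prod_apply hs, lintegral_map (measurable_measure_prodMk_left hs) hX]

lemma measure_le_neg_eq_lintegral [IsProbabilityMeasure μ] {M : Ω → EReal} {E : Ω → ℝ}
    (h : IndepFun M E μ) (hM : Measurable M) (hE : Measurable E)
    (hEtail : ∀ t : ℝ, 0 ≤ t → μ {ω | t < E ω} = ENNReal.ofReal (Real.exp (-t))) :
    μ {ω | M ω ≤ ↑(-E ω)} = ∫⁻ ω, EReal.exp (M ω ⊔ 0) - EReal.exp (M ω) ∂μ := by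
  have hs : MeasurableSet {p : EReal × ℝ | p.1 ≤ ↑(-p.2)} :=
    measurableSet_le measurable_fst (measurable_coe_real_ereal.comp measurable_snd.neg)
  have := Measure.isProbabilityMeasure_map (μ := μ) hE.aemeasurable
  refine (h.measure_preimage_eq_lintegral hM hE hs).trans (lintegral_congr fun ω => ?_)
  refine measure_le_neg_eq_exp_sup_sub_exp (fun t ht => ?_) (M ω)
  rw [Measure.map_apply hE measurableSet_Ioi]
  exact hEtail t ht

end ProbabilityTheory.IndepFun

theorem gp_cdf_of_spectral_general
    {Ω : Type*} [MeasurableSpace Ω] (μ : Measure Ω) [IsProbabilityMeasure μ]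
    {d : ℕ}
    (S : Ω → Fin d → EReal) (E : Ω → ℝ)
    (hSmeas : Measurable S) (hEmeas : Measurable E)
    (hSle : ∀ ω j, S ω j ≤ 0)
    (hSmax : ∀ᵐ ω ∂μ, (⨆ j, S ω j) = 0)
    (hE : ∀ t : ℝ, 0 ≤ t → μ {ω | t < E ω} = ENNReal.ofReal (Real.exp (-t)))
    (hindep : IndepFun S E μ)
    (z : Fin d → ℝ) :
    μ {ω | ∀ j, S ω j + (E ω : EReal) ≤ (z j : EReal)} =
      (∫⁻ ω, EReal.exp (⨆ j, S ω j - ((min (z j) 0 : ℝ) : EReal)) ∂μ)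
        - ∫⁻ ω, EReal.exp (⨆ j, S ω j - ((z j : ℝ) : EReal)) ∂μ := by
  set f : (Fin d → EReal) → EReal := fun s => ⨆ j, s j - (z j : EReal)
  have hf : Measurable f :=
    .iSup fun j => (EReal.measurable_sub_coe _).comp (measurable_pi_apply j)
  have hevent :
      {ω | ∀ j, S ω j + (E ω : EReal) ≤ (z j : EReal)} = {ω | f (S ω) ≤ ↑(-E ω)} := by
    simp only [f, iSup_le_iff, EReal.add_coe_le_coe_iff_sub_le]
  obtain ⟨c, hc⟩ : ∃ c : ℝ, ∀ j, -z j ≤ c := Finite.exists_le _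
  have hbounded : ∀ ω, EReal.exp (f (S ω)) ≤ ENNReal.ofReal (Real.exp c) := fun ω =>
    (EReal.exp_monotone <| iSup_le fun j => (EReal.sub_le_sub (hSle ω j) le_rfl).trans
      (by simpa using EReal.coe_le_coe_iff.mpr (hc j))).trans_eq (EReal.exp_coe c)
  have hfinite : ∫⁻ ω, EReal.exp (f (S ω)) ∂μ ≠ ⊤ :=
    (IsFiniteMeasure.lintegral_lt_top_of_bounded_to_ennreal μ ⟨_, hbounded⟩).ne
  have hindep_f : IndepFun (fun ω => f (S ω)) E μ := hindep.comp hf measurable_id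
  rw [hevent, hindep_f.measure_le_neg_eq_lintegral (hf.comp hSmeas) hEmeas hE,
    lintegral_sub (g := fun ω => EReal.exp (f (S ω))) (by fun_prop) hfinite
      (.of_forall fun ω => EReal.exp_monotone le_sup_left)]
  congr 1
  refine lintegral_congr_ae (hSmax.mono fun ω hω => ?_)
  simp only [f, EReal.iSup_sub_coe_min_zero hω]

/-- Let `S` be a spectral random vector (values in `[-∞,0]^d`, `max_j S_j = 0` a.s.,
`P[S_j > -∞] > 0` for all `j`) and `E` a unit exponential random variable independent
of `S`. Then for every `z ∈ ℝ^d` with `max z > 0`,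
`P[S + E ≤ z] = E[e^{max(S - (z ∧ 0))}] - E[e^{max(S - z)}]`. -/
theorem gp_cdf_of_spectral
    {Ω : Type*} [MeasurableSpace Ω] (μ : Measure Ω) [IsProbabilityMeasure μ]
    {d : ℕ} (hd : 0 < d)
    (S : Ω → Fin d → EReal) (E : Ω → ℝ)
    (hSmeas : Measurable S) (hEmeas : Measurable E)
    (hSle : ∀ ω j, S ω j ≤ 0)
    (hSmax : ∀ᵐ ω ∂μ, (⨆ j, S ω j) = 0)
    (hSbot : ∀ j, 0 < μ {ω | ⊥ < S ω j})
    (hE : ∀ t : ℝ, 0 ≤ t → μ {ω | t < E ω} = ENNReal.ofReal (Real.exp (-t)))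
    (hindep : IndepFun S E μ)
    (z : Fin d → ℝ) (hz : 0 < ⨆ j, z j) :
    μ {ω | ∀ j, S ω j + (E ω : EReal) ≤ (z j : EReal)} =
      (∫⁻ ω, EReal.exp (⨆ j, S ω j - ((min (z j) 0 : ℝ) : EReal)) ∂μ)
        - ∫⁻ ω, EReal.exp (⨆ j, S ω j - ((z j : ℝ) : EReal)) ∂μ :=
  gp_cdf_of_spectral_general μ S E hSmeas hEmeas hSle hSmax hE hindep z
end

section
/- Let $U$ be a random vector in $[-\infty,\infty)^d$ with $0 < E[e^{U_j}] < \infty$ for all $j$, and define a random vector $S$ (in distribution) by $P[S \in A] = E[\mathbf{1}\{U - \max(U) \in A\} e^{\max(U)}] / E[e^{\max(U)}]$. Then $S$ is a spectral random vector, and $E[e^{S_j}] = E[e^{U_j}]/E[e^{\max(U)}]$ for each $j = 1, \ldots, d$. -/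
/-! With `M = max_k U_k`, the law of `S` is the image of `e^M μ / E[e^M]` under `V = U - M`,
and `E[e^M] ≤ ∑_j E[e^{U_j}] < ∞`. Wherever `e^M > 0`, the maximum is finite and attained, so
`V` is spectral there; and `e^{V_j} e^M = e^{U_j}` pointwise, which gives the exponential moments.
Since `E[e^{S_j}] > 0`, the event `S_j > -∞` has positive probability. -/

open MeasureTheory

theorem exists_eq_iSup_of_iSup_ne_bot {ι α : Type*} [Finite ι] [CompleteLinearOrder α]
    {f : ι → α} (h : ⨆ i, f i ≠ ⊥) : ∃ i, f i = ⨆ i, f i := by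
  cases isEmpty_or_nonempty ι
  · exact absurd (iSup_of_empty f) h
  · exact exists_eq_ciSup_of_finite

theorem Measurable.ereal_sub {α : Type*} [MeasurableSpace α] {f g : α → EReal}
    (hf : Measurable f) (hg : Measurable g) : Measurable fun x => f x - g x := by
  simp_rw [sub_eq_add_neg]
  exact hf.add hg.neg

def spectralSet (ι : Type*) : Set (ι → EReal) := {s | (∀ i, s i ≤ 0) ∧ ⨆ i, s i = 0}

theorem measurableSet_spectralSet (ι : Type*) [Countable ι] :
    MeasurableSet (spectralSet ι) := by
  simp only [spectralSet, Set.ofPred_and, Set.ofPred_forall]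
  exact (MeasurableSet.iInter fun i =>
      measurableSet_le (measurable_pi_apply i) measurable_const).inter
    (measurableSet_eq_fun (Measurable.iSup measurable_pi_apply) measurable_const)

namespace EReal

theorem exp_iSup_le_sum_exp {ι : Type*} [Fintype ι] (u : ι → EReal) :
    exp (⨆ i, u i) ≤ ∑ i, exp (u i) := by
  by_cases hM : ⨆ i, u i = ⊥
  · simp [hM]
  · obtain ⟨i₀, hi₀⟩ := exists_eq_iSup_of_iSup_ne_bot hM
    rw [← hi₀]
    exact Finset.single_le_sum (f := fun i => exp (u i)) (fun _ _ => bot_le) (Finset.mem_univ i₀)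

variable {ι : Type*} [Finite ι] {u : ι → EReal}

theorem sub_iSup_mem_spectralSet (hu : ∀ i, u i < ⊤) (hM : ⨆ i, u i ≠ ⊥) :
    (fun j => u j - ⨆ i, u i) ∈ spectralSet ι := by
  obtain ⟨i₀, hi₀⟩ := exists_eq_iSup_of_iSup_ne_bot hM
  have hMtop : ⨆ i, u i ≠ ⊤ := hi₀ ▸ (hu i₀).ne
  have hle : ∀ j, u j - ⨆ i, u i ≤ 0 := fun j =>
    (EReal.sub_le_sub (le_iSup u j) le_rfl).trans (EReal.sub_self hMtop hM).le
  refine ⟨hle, le_antisymm (iSup_le hle) ?_⟩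
  calc (0 : EReal) = u i₀ - ⨆ i, u i := by rw [hi₀, EReal.sub_self hMtop hM]
    _ ≤ ⨆ j, (u j - ⨆ i, u i) := le_iSup (fun j => u j - ⨆ i, u i) i₀

theorem exp_sub_iSup_mul_exp_iSup (hu : ∀ i, u i < ⊤) (j : ι) :
    exp (u j - ⨆ i, u i) * exp (⨆ i, u i) = exp (u j) := by
  by_cases hM : ⨆ i, u i = ⊥
  · have hj : u j = ⊥ := le_bot_iff.mp (hM ▸ le_iSup u j)
    simp [hM, hj]
  · obtain ⟨i₀, hi₀⟩ := exists_eq_iSup_of_iSup_ne_bot hM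
    lift ⨆ i, u i to ℝ using ⟨hi₀ ▸ (hu i₀).ne, hM⟩ with r
    rw [← exp_add, EReal.sub_add_cancel]

end EReal

section TiltedLaw

variable {Ω Ω' X : Type*} [MeasurableSpace Ω] [MeasurableSpace Ω'] [MeasurableSpace X]
  {μ : Measure Ω} {μ' : Measure Ω'} {S : Ω' → X} {V : Ω → X} {g : Ω → ENNReal} {Z : ENNReal}

theorem map_eq_smul_map_withDensity_of_law (hS : Measurable S) (hV : Measurable V)
    (hlaw : ∀ A, MeasurableSet A →
      μ' (S ⁻¹' A) = (∫⁻ ω, A.indicator (fun _ => 1) (V ω) * g ω ∂μ) / Z) :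
    μ'.map S = Z⁻¹ • (μ.withDensity g).map V := by
  ext A hA
  rw [Measure.map_apply hS hA, hlaw A hA, Measure.smul_apply, smul_eq_mul,
    Measure.map_apply hV hA, withDensity_apply _ (hV hA), ← lintegral_indicator (hV hA),
    ENNReal.div_eq_inv_mul]
  congr 1
  refine lintegral_congr fun ω => ?_
  by_cases hω : V ω ∈ A <;> simp [hω]

theorem lintegral_comp_eq_of_law (hS : Measurable S) (hV : Measurable V) (hg : Measurable g)
    (hlaw : ∀ A, MeasurableSet A →
      μ' (S ⁻¹' A) = (∫⁻ ω, A.indicator (fun _ => 1) (V ω) * g ω ∂μ) / Z)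
    {f : X → ENNReal} (hf : Measurable f) :
    ∫⁻ ω', f (S ω') ∂μ' = (∫⁻ ω, f (V ω) * g ω ∂μ) / Z := by
  rw [← lintegral_map hf hS, map_eq_smul_map_withDensity_of_law hS hV hlaw,
    lintegral_smul_measure, lintegral_map hf hV, smul_eq_mul, ENNReal.div_eq_inv_mul]
  congr 1
  exact (lintegral_withDensity_eq_lintegral_mul μ hg (hf.comp hV)).trans
    (lintegral_congr fun ω => mul_comm _ _)

theorem ae_mem_of_law {A : Set X} (hA : MeasurableSet A) (hVA : ∀ ω, g ω ≠ 0 → V ω ∈ A)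
    (hlaw : ∀ A, MeasurableSet A →
      μ' (S ⁻¹' A) = (∫⁻ ω, A.indicator (fun _ => 1) (V ω) * g ω ∂μ) / Z) :
    ∀ᵐ ω' ∂μ', S ω' ∈ A := by
  rw [ae_iff, show {ω' | ¬S ω' ∈ A} = S ⁻¹' Aᶜ from rfl, hlaw _ hA.compl]
  have hzero : ∀ ω, Aᶜ.indicator (fun _ => (1 : ENNReal)) (V ω) * g ω = 0 := fun ω => by
    by_cases hg0 : g ω = 0
    · simp [hg0]
    · simp [hVA ω hg0]
  simp [hzero]

end TiltedLaw

theorem lintegral_exp_iSup_lt_top {Ω ι : Type*} [MeasurableSpace Ω] [Fintype ι] {μ : Measure Ω}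
    {u : Ω → ι → EReal} (hu : ∀ i, Measurable fun ω => u ω i)
    (hfin : ∀ i, ∫⁻ ω, EReal.exp (u ω i) ∂μ < ⊤) :
    ∫⁻ ω, EReal.exp (⨆ i, u ω i) ∂μ < ⊤ :=
  calc ∫⁻ ω, EReal.exp (⨆ i, u ω i) ∂μ ≤ ∫⁻ ω, ∑ i, EReal.exp (u ω i) ∂μ :=
        lintegral_mono fun ω => EReal.exp_iSup_le_sum_exp (u ω)
    _ = ∑ i, ∫⁻ ω, EReal.exp (u ω i) ∂μ := lintegral_finsetSum _ fun i _ => (hu i).ereal_exp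
    _ < ⊤ := ENNReal.sum_lt_top.mpr fun i _ => hfin i

theorem tilted_spectral_vector_general
    {Ω Ω' : Type*} [MeasurableSpace Ω] [MeasurableSpace Ω']
    (μ : Measure Ω)
    (μ' : Measure Ω')
    {d : ℕ}
    (U : Ω → Fin d → EReal) (hUmeas : Measurable U)
    (hUtop : ∀ ω j, U ω j < ⊤)
    (hUexp : ∀ j, 0 < ∫⁻ ω, EReal.exp (U ω j) ∂μ ∧ ∫⁻ ω, EReal.exp (U ω j) ∂μ < ⊤)
    (S : Ω' → Fin d → EReal) (hSmeas : Measurable S)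
    (hlaw : ∀ A : Set (Fin d → EReal), MeasurableSet A →
      μ' (S ⁻¹' A) =
        (∫⁻ ω, A.indicator (fun _ => (1 : ENNReal)) (fun j => U ω j - ⨆ k, U ω k)
            * EReal.exp (⨆ k, U ω k) ∂μ)
          / ∫⁻ ω, EReal.exp (⨆ k, U ω k) ∂μ) :
    (∀ᵐ ω' ∂μ', (∀ j, S ω' j ≤ 0) ∧ (⨆ j, S ω' j) = 0) ∧
      (∀ j, 0 < μ' {ω' | ⊥ < S ω' j}) ∧
      (∀ j, ∫⁻ ω', EReal.exp (S ω' j) ∂μ' =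
        (∫⁻ ω, EReal.exp (U ω j) ∂μ) / ∫⁻ ω, EReal.exp (⨆ k, U ω k) ∂μ) := by
  have hU : ∀ j, Measurable fun ω => U ω j := fun j => hUmeas.eval
  have hM : Measurable fun ω => ⨆ k, U ω k := .iSup hU
  have hV : Measurable fun ω j => U ω j - ⨆ k, U ω k :=
    measurable_pi_lambda _ fun j => (hU j).ereal_sub hM
  have hZ : ∫⁻ ω, EReal.exp (⨆ k, U ω k) ∂μ ≠ ⊤ :=
    (lintegral_exp_iSup_lt_top hU fun j => (hUexp j).2).ne
  have hmoment : ∀ j, ∫⁻ ω', EReal.exp (S ω' j) ∂μ' =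
      (∫⁻ ω, EReal.exp (U ω j) ∂μ) / ∫⁻ ω, EReal.exp (⨆ k, U ω k) ∂μ := fun j => by
    rw [lintegral_comp_eq_of_law hSmeas hV hM.ereal_exp hlaw (measurable_pi_apply j).ereal_exp]
    simp_rw [EReal.exp_sub_iSup_mul_exp_iSup (hUtop _)]
  refine ⟨ae_mem_of_law (measurableSet_spectralSet _) (fun ω hω => ?_) hlaw, fun j => ?_, hmoment⟩
  · exact EReal.sub_iSup_mem_spectralSet (hUtop ω) (by simpa using hω)
  · have hpos : 0 < ∫⁻ ω', EReal.exp (S ω' j) ∂μ' := by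
      rw [hmoment]
      exact ENNReal.div_pos (hUexp j).1.ne' hZ
    rw [lintegral_pos_iff_support (hSmeas.eval (a := j)).ereal_exp] at hpos
    simpa [Function.support, bot_lt_iff_ne_bot] using hpos

/-- Let `U` be a random vector in `[-∞,∞)^d` with `0 < E[e^{U_j}] < ∞` for all `j`,
and let `S` be a random vector whose law is the exponential tilting
`P[S ∈ A] = E[1{U - max U ∈ A} e^{max U}] / E[e^{max U}]`. Then `S` is a spectral
random vector (values in `[-∞,0]^d` with `max_j S_j = 0` a.s. and `P[S_j > -∞] > 0`),
and `E[e^{S_j}] = E[e^{U_j}] / E[e^{max U}]` for each `j`. -/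
theorem tilted_spectral_vector
    {Ω Ω' : Type*} [MeasurableSpace Ω] [MeasurableSpace Ω']
    (μ : Measure Ω) [IsProbabilityMeasure μ]
    (μ' : Measure Ω') [IsProbabilityMeasure μ']
    {d : ℕ} (hd : 0 < d)
    (U : Ω → Fin d → EReal) (hUmeas : Measurable U)
    (hUtop : ∀ ω j, U ω j < ⊤)
    (hUexp : ∀ j, 0 < ∫⁻ ω, EReal.exp (U ω j) ∂μ ∧ ∫⁻ ω, EReal.exp (U ω j) ∂μ < ⊤)
    (S : Ω' → Fin d → EReal) (hSmeas : Measurable S)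
    (hlaw : ∀ A : Set (Fin d → EReal), MeasurableSet A →
      μ' (S ⁻¹' A) =
        (∫⁻ ω, A.indicator (fun _ => (1 : ENNReal)) (fun j => U ω j - ⨆ k, U ω k)
            * EReal.exp (⨆ k, U ω k) ∂μ)
          / ∫⁻ ω, EReal.exp (⨆ k, U ω k) ∂μ) :
    (∀ᵐ ω' ∂μ', (∀ j, S ω' j ≤ 0) ∧ (⨆ j, S ω' j) = 0) ∧
      (∀ j, 0 < μ' {ω' | ⊥ < S ω' j}) ∧
      (∀ j, ∫⁻ ω', EReal.exp (S ω' j) ∂μ' =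
        (∫⁻ ω, EReal.exp (U ω j) ∂μ) / ∫⁻ ω, EReal.exp (⨆ k, U ω k) ∂μ) :=
  tilted_spectral_vector_general μ μ' U hUmeas hUtop hUexp S hSmeas hlaw
end

section
/- Let $S$ be a spectral random vector supported on $\{s \in \mathbb{R}^d : \max(s) = 0\}$ with density $f_S$ with respect to the $(d-1)$-dimensional Lebesgue measure on that set, and let $E \sim \mathrm{Exp}(1)$ be independent of $S$. Then $Z = S + E$ has $d$-dimensional Lebesgue density $h(z) = \mathbf{1}(z \not\le 0)\, f_S(z - \max(z))\, e^{-\max(z)}$. -/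
open MeasureTheory ENNReal
open scoped Classical

/-- The `(d-1)`-dimensional Lebesgue measure on the set `{s ∈ ℝ^d : max s = 0}`
(equivalently on `{s ≤ 0 : max s = 0}`), obtained as the sum over the faces
`{s : s_j = max s = 0}` of the pushforward of `(d-1)`-dimensional Lebesgue measure
on the nonpositive orthant under the embedding inserting `0` in coordinate `j`. -/
noncomputable def faceMeasure (d : ℕ) : Measure (Fin d → ℝ) :=
  ∑ j : Fin d,
    Measure.map
      (fun s : {k : Fin d // k ≠ j} → ℝ => fun i : Fin d =>
        if h : i = j then 0 else s ⟨i, h⟩)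
      (volume.restrict {s : {k : Fin d // k ≠ j} → ℝ | ∀ k, s k ≤ 0})

/-!
By independence, the part of `(S, E)` living on the `j`-th face has density
`fS (insertCoord j 0 s) e^{-e}` with respect to Lebesgue measure on `ℝ^{d-1} × ℝ`. The map
`(s, e) ↦ insertCoord j 0 s + e` (a shear followed by inserting a coordinate) preserves volume,
and it carries this density to `fS (z - z_j) e^{-z_j}` on the cone `{z : z_j = max z > 0}` and `0`
off it. Up to the null set where two coordinates tie, these cones partition `{z : z ≰ 0}` and
`max z = z_j` on the `j`-th one, so the densities of the faces add up to `h`.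
-/

open ProbabilityTheory Set

lemma MeasureTheory.Measure.map_withDensity_comp {α β : Type*} [MeasurableSpace α]
    [MeasurableSpace β] (μ : Measure α) {g : α → β} (hg : Measurable g) {f : β → ℝ≥0∞}
    (hf : Measurable f) :
    (μ.withDensity (f ∘ g)).map g = (μ.map g).withDensity f := by
  ext s hs
  rw [withDensity_apply _ hs, Measure.map_apply hg hs, withDensity_apply _ (hg hs),
    setLIntegral_map hs hf hg]
  rfl

lemma map_eq_expMeasure_of_tail {Ω : Type*} [MeasurableSpace Ω] {μ : Measure Ω}
    [IsProbabilityMeasure μ] {E : Ω → ℝ} (hE : Measurable E) {r : ℝ} (hr : 0 < r)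
    (htail : ∀ t, 0 ≤ t → μ {ω | t < E ω} = ENNReal.ofReal (Real.exp (-(r * t)))) :
    μ.map E = expMeasure r := by
  have hcdf : ∀ t, 0 ≤ t → μ {ω | E ω ≤ t} = ENNReal.ofReal (1 - Real.exp (-(r * t))) := by
    intro t ht
    have hcompl : {ω | E ω ≤ t}ᶜ = {ω | t < E ω} := by ext; simp
    have hmeas : MeasurableSet {ω | E ω ≤ t} := hE measurableSet_Iic
    rw [← ENNReal.sub_sub_cancel one_ne_top prob_le_one, ← prob_compl_eq_one_sub hmeas, hcompl,
      htail t ht, ENNReal.ofReal_sub _ (Real.exp_pos _).le, ENNReal.ofReal_one]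
  have := isProbabilityMeasure_expMeasure hr
  refine Measure.ext_of_Iic _ _ fun t => ?_
  rw [← ofReal_cdf (expMeasure r), cdf_expMeasure_eq hr, Measure.map_apply hE measurableSet_Iic]
  split_ifs with ht
  · exact hcdf t ht
  · have hneg : μ (E ⁻¹' Iic t) ≤ μ {ω | E ω ≤ 0} :=
      measure_mono fun ω (h : E ω ≤ t) => h.trans (not_le.mp ht).le
    simpa [hcdf 0 le_rfl] using hneg

noncomputable def expDensity (t : ℝ) : ℝ≥0∞ :=
  if 0 < t then ENNReal.ofReal (Real.exp (-t)) else 0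

@[fun_prop]
lemma measurable_expDensity : Measurable expDensity :=
  Measurable.ite measurableSet_Ioi (by fun_prop) measurable_const

lemma expMeasure_one_eq_withDensity : expMeasure 1 = volume.withDensity expDensity := by
  change volume.withDensity (exponentialPDF 1) = _
  refine withDensity_congr_ae ?_
  filter_upwards [compl_mem_ae_iff.mpr (measure_singleton (0 : ℝ))] with t ht
  rcases lt_or_gt_of_ne (show t ≠ 0 from ht) with h | h
  · simp [exponentialPDF_of_neg h, expDensity, h.not_gt]
  · simp [exponentialPDF_of_nonneg h.le, expDensity, h]

noncomputable def coneDensity {ι : Type*} (f : (ι → ℝ) → ℝ≥0∞) (j : ι) (z : ι → ℝ) : ℝ≥0∞ :=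
  if 0 < z j ∧ ∀ i, z i ≤ z j then f (fun i => z i - z j) * ENNReal.ofReal (Real.exp (-z j))
  else 0

lemma measurable_coneDensity {ι : Type*} [Countable ι] {f : (ι → ℝ) → ℝ≥0∞} (hf : Measurable f)
    (j : ι) :
    Measurable (coneDensity f j) := by
  have hcone : MeasurableSet {z : ι → ℝ | 0 < z j ∧ ∀ i, z i ≤ z j} := by
    simp only [ofPred_and, ofPred_forall]
    exact (measurableSet_lt measurable_const (measurable_pi_apply j)).inter
      (.iInter fun i => measurableSet_le (measurable_pi_apply i) (measurable_pi_apply j))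
  exact Measurable.ite hcone (by fun_prop) measurable_const

lemma ae_injective {ι : Type*} [Fintype ι] :
    ∀ᵐ z ∂(volume : Measure (ι → ℝ)), Function.Injective z := by
  simp only [Function.Injective, ae_all_iff]
  intro i k
  by_cases hik : i = k
  · exact .of_forall fun _ _ => hik
  have hdiag : volume {z : ι → ℝ | z i = z k} = 0 := by
    have hker : {z : ι → ℝ | z i = z k} =
        LinearMap.ker (LinearMap.proj (R := ℝ) (φ := fun _ : ι => ℝ) i - LinearMap.proj k) := by
      ext z; simp [sub_eq_zero]
    refine hker ▸ Measure.addHaar_submodule _ _ fun htop => ?_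
    have := htop ▸ Submodule.mem_top (x := (Pi.single i 1 : ι → ℝ))
    simp [hik] at this
  filter_upwards [measure_eq_zero_iff_ae_notMem.mp hdiag] with z hz h using absurd h hz

lemma sum_coneDensity_of_injective {ι : Type*} [Fintype ι] (f : (ι → ℝ) → ℝ≥0∞) {z : ι → ℝ}
    (hz : Function.Injective z) :
    ∑ j, coneDensity f j z = if ∃ j, 0 < z j then
      f (fun j => z j - ⨆ k, z k) * ENNReal.ofReal (Real.exp (-(⨆ k, z k))) else 0 := by
  split_ifs with hpos
  · obtain ⟨j₀, hj₀⟩ := hpos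
    have : Nonempty ι := ⟨j₀⟩
    obtain ⟨m, hm⟩ := Finite.exists_max z
    have hsup : ⨆ k, z k = z m :=
      le_antisymm (ciSup_le hm) (le_ciSup (Finite.bddAbove_range z) m)
    rw [Finset.sum_eq_single m, coneDensity, if_pos ⟨hj₀.trans_le (hm j₀), hm⟩, hsup]
    · intro j _ hjm
      rw [coneDensity, if_neg]
      exact fun h => hjm (hz (le_antisymm (hm j) (h.2 m)))
    · simp
  · exact Finset.sum_eq_zero fun j _ => if_neg fun h => hpos ⟨j, h.1⟩

section Faces

variable {ι : Type*} [DecidableEq ι]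

def insertCoord (j : ι) (x : ℝ) (s : {k // k ≠ j} → ℝ) : ι → ℝ :=
  fun i => if h : i = j then x else s ⟨i, h⟩

@[simp] lemma insertCoord_self (j : ι) (x : ℝ) (s : {k // k ≠ j} → ℝ) :
    insertCoord j x s j = x := dif_pos rfl

lemma insertCoord_of_ne {j i : ι} (h : i ≠ j) (x : ℝ) (s : {k // k ≠ j} → ℝ) :
    insertCoord j x s i = s ⟨i, h⟩ := dif_neg h

@[fun_prop]
lemma measurable_insertCoord (j : ι) :
    Measurable fun p : ℝ × ({k // k ≠ j} → ℝ) => insertCoord j p.1 p.2 := by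
  refine measurable_pi_lambda _ fun i => ?_
  by_cases h : i = j
  · simp only [insertCoord, dif_pos h]; fun_prop
  · simp only [insertCoord, dif_neg h]; fun_prop

lemma insertCoord_nonpos_iff {j : ι} {s : {k // k ≠ j} → ℝ} :
    insertCoord j 0 s ≤ 0 ↔ s ≤ 0 := by
  refine ⟨fun h k => by simpa [insertCoord_of_ne k.2] using h k, fun h i => ?_⟩
  by_cases hi : i = j
  · simp [hi]
  · simpa [insertCoord_of_ne hi] using h ⟨i, hi⟩

lemma insertCoord_zero_add (j : ι) (s : {k // k ≠ j} → ℝ) (e : ℝ) :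
    (fun i => insertCoord j 0 s i + e) = insertCoord j e (fun k => s k + e) := by
  funext i
  by_cases h : i = j
  · subst h; simp
  · simp [insertCoord_of_ne h]

lemma measurePreserving_insertCoord [Fintype ι] (j : ι) :
    MeasurePreserving (fun p : ℝ × ({k // k ≠ j} → ℝ) => insertCoord j p.1 p.2)
      (volume.prod volume) volume := by
  have hsplit := (measurePreserving_piEquivPiSubtypeProd (fun _ : ι => (volume : Measure ℝ))
    (· = j)).symm
  have hunique : MeasurePreserving (MeasurableEquiv.funUnique {i // i = j} ℝ).symm volume
      (@Measure.pi _ _ (Subtype.fintype _) _ fun _ => volume) := by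
    convert (measurePreserving_funUnique (volume : Measure ℝ) {i // i = j}).symm
    rfl
  -- the side goals `rfl` and `volume_pi` only reconcile `Fintype` instances on subtypes
  convert hsplit.comp (hunique.prod (MeasurePreserving.id volume)) using 1
  · rfl
  · funext p i
    by_cases h : i = j
    · subst h; simp [MeasurableEquiv.piEquivPiSubtypeProd]
    · simp [MeasurableEquiv.piEquivPiSubtypeProd, insertCoord_of_ne h, h]
  · rw [volume_pi]

lemma measurePreserving_add_const_prod {κ : Type*} [Fintype κ] :
    MeasurePreserving (fun p : (κ → ℝ) × ℝ => (p.2, fun k => p.1 k + p.2))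
      (volume.prod volume) (volume.prod volume) := by
  have hshear : MeasurePreserving (fun p : ℝ × (κ → ℝ) => (p.1, p.2 + fun _ => p.1))
      (volume.prod volume) (volume.prod volume) :=
    (MeasurePreserving.id volume).skew_product (g := fun e s => s + fun _ => e) (by fun_prop)
      (.of_forall fun e => map_add_right_eq_self volume _)
  exact hshear.comp Measure.measurePreserving_swap

lemma measurePreserving_insertCoord_zero_add [Fintype ι] (j : ι) :
    MeasurePreserving (fun p : ({k // k ≠ j} → ℝ) × ℝ => fun i => insertCoord j 0 p.1 i + p.2)
      (volume.prod volume) volume := by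
  convert (measurePreserving_insertCoord j).comp measurePreserving_add_const_prod using 1
  funext p
  exact insertCoord_zero_add j p.1 p.2

lemma coneDensity_insertCoord_zero_add (f : (ι → ℝ) → ℝ≥0∞) (j : ι) (s : {k // k ≠ j} → ℝ)
    (e : ℝ) :
    coneDensity f j (fun i => insertCoord j 0 s i + e)
      = (Iic 0).indicator (f ∘ insertCoord j 0) s * expDensity e := by
  set z := fun i => insertCoord j 0 s i + e
  have hz : z j = e := by simp [z]
  have hsub : (fun i => z i - z j) = insertCoord j 0 s := by simp [z]
  have hle : (∀ i, z i ≤ z j) ↔ s ∈ Iic 0 := by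
    simpa [z, Pi.le_def] using insertCoord_nonpos_iff
  rw [coneDensity, hle, hsub, hz]
  by_cases he : 0 < e <;> by_cases hs : s ∈ Iic 0 <;> simp [expDensity, he, hs]

lemma map_add_prod_withDensity_face [Fintype ι] {f : (ι → ℝ) → ℝ≥0∞} (hf : Measurable f)
    (j : ι) :
    ((((volume : Measure ({k // k ≠ j} → ℝ)).restrict (Iic 0)).map (insertCoord j 0)).withDensity f
        |>.prod (volume.withDensity expDensity)).map (fun p : (ι → ℝ) × ℝ => fun i => p.1 i + p.2)
      = volume.withDensity (coneDensity f j) := by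
  have hemb : Measurable (insertCoord j 0) := by fun_prop
  have hT := measurePreserving_insertCoord_zero_add j
  have hdens : (fun p : ({k // k ≠ j} → ℝ) × ℝ =>
      (Iic 0).indicator (f ∘ insertCoord j 0) p.1 * expDensity p.2)
      = coneDensity f j ∘ fun p => fun i => insertCoord j 0 p.1 i + p.2 := by
    funext p
    exact (coneDensity_insertCoord_zero_add f j p.1 p.2).symm
  rw [← Measure.map_withDensity_comp _ hemb hf, ← withDensity_indicator measurableSet_Iic,
    ← Measure.map_id (μ := volume.withDensity expDensity),
    Measure.map_prod_map _ _ hemb measurable_id,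
    Measure.map_map (by fun_prop) (hemb.prodMap measurable_id),
    prod_withDensity ((hf.comp hemb).indicator measurableSet_Iic) measurable_expDensity, hdens]
  exact (Measure.map_withDensity_comp _ hT.measurable (measurable_coneDensity hf j)).trans
    (by rw [hT.map_eq])

end Faces

lemma faceMeasure_eq_sum (d : ℕ) :
    faceMeasure d = Measure.sum fun j : Fin d =>
      ((volume : Measure ({k // k ≠ j} → ℝ)).restrict (Iic 0)).map (insertCoord j 0) :=
  (Measure.sum_fintype _).symm

theorem gp_density_of_spectral_density_general
    {Ω : Type*} [MeasurableSpace Ω] (μ : Measure Ω) [IsProbabilityMeasure μ]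
    {d : ℕ}
    (S : Ω → Fin d → ℝ) (E : Ω → ℝ)
    (hSmeas : Measurable S) (hEmeas : Measurable E)
    (fS : (Fin d → ℝ) → ℝ≥0∞) (hfS : Measurable fS)
    (hdens : μ.map S = (faceMeasure d).withDensity fS)
    (hE : ∀ t : ℝ, 0 ≤ t → μ {ω | t < E ω} = ENNReal.ofReal (Real.exp (-t)))
    (hindep : ProbabilityTheory.IndepFun S E μ) :
    μ.map (fun ω => fun j => S ω j + E ω) =
      volume.withDensity (fun z =>
        if ∃ j, 0 < z j then
          fS (fun j => z j - ⨆ k, z k) * ENNReal.ofReal (Real.exp (-(⨆ k, z k)))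
        else 0) := by
  have hadd : Measurable fun p : (Fin d → ℝ) × ℝ => fun j => p.1 j + p.2 := by fun_prop
  have hlawE : μ.map E = volume.withDensity expDensity := by
    rw [map_eq_expMeasure_of_tail hEmeas one_pos (by simpa using hE),
      expMeasure_one_eq_withDensity]
  have hjoint : μ.map (fun ω => (S ω, E ω)) = (μ.map S).prod (μ.map E) :=
    (indepFun_iff_map_prod_eq_prod_map_map hSmeas.aemeasurable hEmeas.aemeasurable).mp hindep
  calc μ.map (fun ω j => S ω j + E ω)
      = ((μ.map S).prod (μ.map E)).map fun p j => p.1 j + p.2 := by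
        rw [← hjoint, Measure.map_map hadd (hSmeas.prodMk hEmeas)]; rfl
    _ = Measure.sum fun j => volume.withDensity (coneDensity fS j) := by
        simp_rw [hdens, hlawE, faceMeasure_eq_sum, withDensity_sum, Measure.prod_sum_left,
          Measure.map_sum hadd.aemeasurable, map_add_prod_withDensity_face hfS]
    _ = _ := by
        rw [← withDensity_tsum (measurable_coneDensity hfS)]
        refine withDensity_congr_ae ?_
        filter_upwards [ae_injective] with z hz
        simp only [tsum_fintype, Finset.sum_apply]
        convert sum_coneDensity_of_injective fS hz

/-- Let `S` be a spectral random vector supported on `{s ∈ ℝ^d : max s = 0}` with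
density `f_S` with respect to the `(d-1)`-dimensional Lebesgue measure on that set,
and let `E ∼ Exp(1)` be independent of `S`. Then `Z = S + E` has `d`-dimensional
Lebesgue density `h(z) = 1(z ≰ 0) f_S(z - max z) e^{-max z}`. -/
theorem gp_density_of_spectral_density
    {Ω : Type*} [MeasurableSpace Ω] (μ : Measure Ω) [IsProbabilityMeasure μ]
    {d : ℕ} (hd : 0 < d)
    (S : Ω → Fin d → ℝ) (E : Ω → ℝ)
    (hSmeas : Measurable S) (hEmeas : Measurable E)
    (hSle : ∀ ω j, S ω j ≤ 0)
    (hSmax : ∀ ω, (⨆ j, S ω j) = 0)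
    (fS : (Fin d → ℝ) → ℝ≥0∞) (hfS : Measurable fS)
    (hdens : μ.map S = (faceMeasure d).withDensity fS)
    (hE : ∀ t : ℝ, 0 ≤ t → μ {ω | t < E ω} = ENNReal.ofReal (Real.exp (-t)))
    (hindep : ProbabilityTheory.IndepFun S E μ) :
    μ.map (fun ω => fun j => S ω j + E ω) =
      volume.withDensity (fun z =>
        if ∃ j, 0 < z j then
          fS (fun j => z j - ⨆ k, z k) * ENNReal.ofReal (Real.exp (-(⨆ k, z k)))
        else 0) :=
  gp_density_of_spectral_density_general μ S E hSmeas hEmeas fS hfS hdens hE hindep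
end

section
/- Let $T$ be a random vector in $\mathbb{R}^d$ with Lebesgue density $f_T$, and $E \sim \mathrm{Exp}(1)$ independent of $T$. Then $Z = T - \max(T) + E$ has Lebesgue density $h(z) = \mathbf{1}(z \not\le 0) \, e^{-\max(z)} \int_0^\infty f_T(z + \log t) \, t^{-1} \, dt$, where $z + \log t$ adds the scalar $\log t$ to every component. -/
/-!
The pair `(T, E)` has density `f_T(t) e^{-e} 1(e > 0)`, and `Z` is its image under
`(t, e) ↦ t - max t + e`. Testing against a function `G`, Tonelli and the substitution
`t = z + r`, `e = max t - r` (so that `t - max t + e = z`, since `max (z + r) = max z + r`) turn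
`∫∫ f_T(t) e^{-e} 1(e > 0) G(t - max t + e)` into
`∫ e^{-max z} 1(max z > 0) (∫ f_T(z + r) dr) G(z) dz`; then `max z > 0` iff `z ≰ 0`, and
`r = log t` gives the stated form.
-/

open MeasureTheory
open scoped Classical ENNReal
open Real Set

/-- Unlike `ProbabilityTheory.exponentialPDF 1`, this vanishes at `0`, so that it matches the
factor `1(z ≰ 0)` pointwise rather than almost everywhere. -/
noncomputable def stdExpDensity : ℝ → ℝ≥0∞ := (Ioi 0).indicator fun e => ENNReal.ofReal (exp (-e))

@[fun_prop]
theorem measurable_stdExpDensity : Measurable stdExpDensity :=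
  (by fun_prop : Measurable fun e : ℝ => ENNReal.ofReal (exp (-e))).indicator measurableSet_Ioi

theorem lintegral_Ioi_exp_neg (c : ℝ) :
    ∫⁻ x in Ioi c, ENNReal.ofReal (exp (-x)) = ENNReal.ofReal (exp (-c)) := by
  rw [← ofReal_integral_eq_lintegral_ofReal (exp_neg_integrableOn_Ioi c one_pos |>.congr_fun
    (fun x _ => by simp) measurableSet_Ioi) (.of_forall fun x => (exp_pos _).le),
    integral_exp_neg_Ioi]

theorem withDensity_stdExpDensity_Ioi (a : ℝ) :
    volume.withDensity stdExpDensity (Ioi a) = ENNReal.ofReal (exp (-max 0 a)) := by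
  rw [withDensity_apply _ measurableSet_Ioi, stdExpDensity, lintegral_indicator measurableSet_Ioi,
    Measure.restrict_restrict measurableSet_Ioi, Ioi_inter_Ioi, lintegral_Ioi_exp_neg]

theorem lintegral_stdExpDensity : ∫⁻ e, stdExpDensity e = 1 := by
  rw [stdExpDensity, lintegral_indicator measurableSet_Ioi, lintegral_Ioi_exp_neg, neg_zero,
    exp_zero, ENNReal.ofReal_one]

theorem eq_withDensity_stdExpDensity {ν : Measure ℝ} [IsProbabilityMeasure ν]
    (h : ∀ t, 0 ≤ t → ν (Ioi t) = ENNReal.ofReal (exp (-t))) :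
    ν = volume.withDensity stdExpDensity := by
  have hν_Ioi (a : ℝ) : ν (Ioi a) = ENNReal.ofReal (exp (-max 0 a)) := by
    rcases le_or_gt 0 a with ha | ha
    · rw [h a ha, max_eq_right ha]
    · have h0 : ν (Ioi 0) = 1 := by simpa using h 0 le_rfl
      rw [max_eq_left ha.le, neg_zero, exp_zero, ENNReal.ofReal_one]
      exact le_antisymm prob_le_one (h0 ▸ measure_mono (Ioi_subset_Ioi ha.le))
  refine ext_of_generate_finite (range Ioi) (borel_eq_generateFrom_Ioi ℝ) isPiSystem_Ioi ?_ ?_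
  · rintro _ ⟨a, rfl⟩
    rw [hν_Ioi, withDensity_stdExpDensity_Ioi]
  · rw [measure_univ, withDensity_apply _ MeasurableSet.univ, Measure.restrict_univ,
      lintegral_stdExpDensity]

theorem map_prod_eq_withDensity_of_indepFun {Ω α β : Type*} [MeasurableSpace Ω]
    [MeasurableSpace α] [MeasurableSpace β] {μ : Measure Ω} [IsFiniteMeasure μ]
    {X : Ω → α} {Y : Ω → β}
    {ν₁ : Measure α} {ν₂ : Measure β} [SFinite ν₁] [SFinite ν₂] {f : α → ℝ≥0∞} {g : β → ℝ≥0∞}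
    (hX : Measurable X) (hY : Measurable Y) (hf : Measurable f) (hg : Measurable g)
    (hXY : ProbabilityTheory.IndepFun X Y μ)
    (hX_law : μ.map X = ν₁.withDensity f) (hY_law : μ.map Y = ν₂.withDensity g) :
    μ.map (fun ω => (X ω, Y ω)) = (ν₁.prod ν₂).withDensity fun p => f p.1 * g p.2 := by
  rw [(ProbabilityTheory.indepFun_iff_map_prod_eq_prod_map_map hX.aemeasurable
    hY.aemeasurable).1 hXY, hX_law, hY_law, prod_withDensity hf hg]

section ShiftByMax

variable {ι : Type*} [Fintype ι]

@[fun_prop]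
theorem measurable_iSup_apply : Measurable fun z : ι → ℝ => ⨆ k, z k :=
  Measurable.iSup measurable_pi_apply

variable [Nonempty ι]

theorem iSup_add_const (z : ι → ℝ) (c : ℝ) : ⨆ k, (z k + c) = (⨆ k, z k) + c :=
  (ciSup_add (Finite.bddAbove_range z) c).symm

theorem iSup_sub_iSup_add (t : ι → ℝ) (e : ℝ) : ⨆ k, (t k - (⨆ k, t k) + e) = e := by
  have h k : t k - (⨆ k, t k) + e = t k + (e - ⨆ k, t k) := by ring
  simp_rw [h, iSup_add_const, add_sub_cancel]

theorem lintegral_lintegral_comp_sub_iSup_add {F G : (ι → ℝ) → ℝ≥0∞} {g : ℝ → ℝ≥0∞}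
    (hF : Measurable F) (hG : Measurable G) (hg : Measurable g) :
    ∫⁻ t, ∫⁻ e, F t * g e * G (fun j => t j - (⨆ k, t k) + e) =
      ∫⁻ z, g (⨆ k, z k) * (∫⁻ r, F (fun j => z j + r)) * G z := by
  set c : (ι → ℝ) → ℝ≥0∞ := fun z => G z * g (⨆ k, z k)
  have hc : Measurable c := by fun_prop
  symm
  calc ∫⁻ z, g (⨆ k, z k) * (∫⁻ r, F (fun j => z j + r)) * G z
      = ∫⁻ z, ∫⁻ r, c z * F (fun j => z j + r) := by
        refine lintegral_congr fun z => ?_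
        rw [lintegral_const_mul _ (by fun_prop)]
        ring
    _ = ∫⁻ r, ∫⁻ z, c z * F (fun j => z j + r) :=
        lintegral_lintegral_swap (by fun_prop)
    _ = ∫⁻ r, ∫⁻ t, c (fun j => t j - r) * F t := by
        refine lintegral_congr fun r => ?_
        rw [← lintegral_add_right_eq_self _ (fun _ => -r)]
        simp only [Pi.add_def, ← sub_eq_add_neg, sub_add_cancel]
    _ = ∫⁻ t, ∫⁻ r, c (fun j => t j - r) * F t :=
        lintegral_lintegral_swap (by fun_prop)
    _ = ∫⁻ t, ∫⁻ e, c (fun j => t j - ((⨆ k, t k) - e)) * F t :=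
        lintegral_congr fun t =>
          (lintegral_sub_left_eq_self (fun r => c (fun j => t j - r) * F t) _).symm
    _ = ∫⁻ t, ∫⁻ e, F t * g e * G (fun j => t j - (⨆ k, t k) + e) := by
        refine lintegral_congr fun t => lintegral_congr fun e => ?_
        simp only [c, sub_sub_eq_add_sub, add_sub_right_comm, iSup_sub_iSup_add]
        ring

theorem map_withDensity_prod_sub_iSup_add {F : (ι → ℝ) → ℝ≥0∞} {g : ℝ → ℝ≥0∞}
    (hF : Measurable F) (hg : Measurable g) :
    (((volume : Measure (ι → ℝ)).prod (volume : Measure ℝ)).withDensity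
        fun p => F p.1 * g p.2).map (fun p => fun j => p.1 j - (⨆ k, p.1 k) + p.2) =
      volume.withDensity fun z => g (⨆ k, z k) * ∫⁻ r, F (fun j => z j + r) := by
  refine Measure.ext_of_lintegral _ fun G hG => ?_
  rw [lintegral_map hG (by fun_prop), lintegral_withDensity_eq_lintegral_mul _ (by fun_prop) hG,
    lintegral_withDensity_eq_lintegral_mul _ (by fun_prop) (by fun_prop),
    lintegral_prod _ (by fun_prop)]
  exact lintegral_lintegral_comp_sub_iSup_add hF hG hg

end ShiftByMax

theorem integral_Ioi_comp_log_div (f : ℝ → ℝ) :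
    ∫ t in Ioi 0, f (log t) / t = ∫ r, f r := by
  rw [← range_exp, ← image_univ, integral_image_eq_integral_abs_deriv_smul MeasurableSet.univ
    (fun x _ => (hasDerivAt_exp x).hasDerivWithinAt) exp_injective.injOn, setIntegral_univ]
  congr 1 with r
  rw [abs_of_pos (exp_pos r), smul_eq_mul, log_exp, mul_div_cancel₀ _ (exp_pos r).ne']

theorem stdExpDensity_iSup_mul_lintegral_eq {ι : Type*} [Fintype ι] [Nonempty ι]
    (f : (ι → ℝ) → ℝ) (hf : Measurable f) (hf₀ : ∀ t, 0 ≤ f t) (z : ι → ℝ)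
    (hz : stdExpDensity (⨆ k, z k) * ∫⁻ r, ENNReal.ofReal (f fun j => z j + r) ≠ ∞) :
    stdExpDensity (⨆ k, z k) * ∫⁻ r, ENNReal.ofReal (f fun j => z j + r) =
      if ∃ j, 0 < z j then
        ENNReal.ofReal (exp (-(⨆ k, z k)) * ∫ t in Ioi (0 : ℝ), f (fun j => z j + log t) / t)
      else 0 := by
  have hpos_iff : (∃ j, 0 < z j) ↔ 0 < ⨆ k, z k := (lt_ciSup_iff (Finite.bddAbove_range z)).symm
  split_ifs with hpos
  · rw [hpos_iff] at hpos
    have hL : ∫⁻ r, ENNReal.ofReal (f fun j => z j + r) ≠ ∞ := by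
      rintro hL
      simp [hL, stdExpDensity, hpos, ENNReal.mul_top, exp_pos] at hz
    rw [integral_Ioi_comp_log_div (fun r => f fun j => z j + r),
      integral_eq_lintegral_of_nonneg_ae (.of_forall fun r => hf₀ _)
        (by fun_prop : Measurable fun r => f fun j => z j + r).aestronglyMeasurable,
      ENNReal.ofReal_mul (exp_nonneg _), ENNReal.ofReal_toReal hL, stdExpDensity,
      indicator_of_mem (mem_Ioi.2 hpos)]
  · rw [hpos_iff, ← mem_Ioi] at hpos
    rw [stdExpDensity, indicator_of_notMem hpos, zero_mul]

theorem ae_lt_top_of_isFiniteMeasure_withDensity {α : Type*} [MeasurableSpace α]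
    {μ : Measure α} {f : α → ℝ≥0∞} (hf : AEMeasurable f μ) [IsFiniteMeasure (μ.withDensity f)] :
    ∀ᵐ x ∂μ, f x < ∞ :=
  ae_lt_top' hf (by simpa [withDensity_apply] using measure_ne_top (μ.withDensity f) univ)

/-- Let `T` be a random vector in `ℝ^d` with Lebesgue density `f_T` and `E ∼ Exp(1)`
independent of `T`. Then `Z = T - max T + E` has Lebesgue density
`h(z) = 1(z ≰ 0) e^{-max z} ∫_0^∞ f_T(z + log t) t⁻¹ dt`. -/
theorem gpT_density
    {Ω : Type*} [MeasurableSpace Ω] (μ : Measure Ω) [IsProbabilityMeasure μ]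
    {d : ℕ} (hd : 0 < d)
    (T : Ω → Fin d → ℝ) (E : Ω → ℝ)
    (hTmeas : Measurable T) (hEmeas : Measurable E)
    (fT : (Fin d → ℝ) → ℝ) (hfT : Measurable fT) (hfTnn : ∀ t, 0 ≤ fT t)
    (hdens : μ.map T = volume.withDensity (fun t => ENNReal.ofReal (fT t)))
    (hE : ∀ t : ℝ, 0 ≤ t → μ {ω | t < E ω} = ENNReal.ofReal (Real.exp (-t)))
    (hindep : ProbabilityTheory.IndepFun T E μ) :
    μ.map (fun ω => fun j => T ω j - (⨆ k, T ω k) + E ω) =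
      volume.withDensity (fun z =>
        if ∃ j, 0 < z j then
          ENNReal.ofReal (Real.exp (-(⨆ k, z k)) *
            ∫ t in Set.Ioi (0 : ℝ), fT (fun j => z j + Real.log t) / t)
        else 0) := by
  have : Nonempty (Fin d) := ⟨⟨0, hd⟩⟩
  have hE_law : μ.map E = volume.withDensity stdExpDensity := by
    have := Measure.isProbabilityMeasure_map (μ := μ) hEmeas.aemeasurable
    exact eq_withDensity_stdExpDensity fun t ht =>
      (Measure.map_apply hEmeas measurableSet_Ioi).trans (hE t ht)
  set H : (Fin d → ℝ) → ℝ≥0∞ :=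
    fun z => stdExpDensity (⨆ k, z k) * ∫⁻ r, ENNReal.ofReal (fT fun j => z j + r)
  have hZ : μ.map (fun ω j => T ω j - (⨆ k, T ω k) + E ω) = volume.withDensity H := by
    rw [← map_withDensity_prod_sub_iSup_add hfT.ennreal_ofReal measurable_stdExpDensity,
      ← map_prod_eq_withDensity_of_indepFun hTmeas hEmeas hfT.ennreal_ofReal
        measurable_stdExpDensity hindep hdens hE_law,
      Measure.map_map (by fun_prop) (by fun_prop)]
    rfl
  have : IsProbabilityMeasure (volume.withDensity H) :=
    hZ ▸ Measure.isProbabilityMeasure_map (by fun_prop)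
  rw [hZ]
  refine withDensity_congr_ae ?_
  have hH : Measurable H := by simp only [H]; fun_prop
  -- the Bochner integral in the claimed density is junk (`0`) wherever `H` is infinite
  filter_upwards [ae_lt_top_of_isFiniteMeasure_withDensity hH.aemeasurable] with z hz
  convert stdExpDensity_iSup_mul_lintegral_eq fT hfT hfTnn z hz.ne
end

section
/- Let $d \ge 1$, $m \ge 1$, $\gamma \ne 0$, $\sigma \in (0,\infty)^d$, and $A \in [0,\infty)^{m \times d}$ with every row $A_i$ satisfying $A_i \sigma > 0$. Let $S$ be a spectral random vector and $E \sim \mathrm{Exp}(1)$ independent of $S$, and set $X_j = \sigma_j(e^{\gamma(S_j+E)}-1)/\gamma$. Then for $x \in \mathbb{R}^m$ with $A_i\sigma + \gamma x_i > 0$ for all $i$: $P[AX \not\le x] = E\left[\min\Big(1, \max_{i=1,\ldots,m} (1+\gamma x_i/A_i\sigma)^{-1/\gamma} e^{U_i}\Big)\right]$, where $U_i = \gamma^{-1}\log\big(\sum_{j=1}^d p_{ij} e^{\gamma S_j}\big)$ with $p_{ij} = a_{ij}\sigma_j / A_i\sigma$. -/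
/-!
Write `v_i = 1 + γ x_i / A_i σ` and `W_i = ∑_j p_ij e^{γ S_j}`, so that `e^{U_i} = W_i^{1/γ}`.
Since `A_i X = A_i σ (e^{γ E} W_i - 1) / γ`, the event `x_i < A_i X` says that `e^{γ E} W_i - v_i`
has the sign of `γ`, i.e. `e^{-E} < v_i^{-1/γ} W_i^{1/γ}`; the extended-real conventions make this
hold also when `W_i` is `0` or `∞`. Hence `{AX ≰ x} = {e^{-E} < max_i v_i^{-1/γ} W_i^{1/γ}}`, and as
`e^{-E}` is uniform on `(0, 1]` and independent of `S`, conditioning on `S` gives the formula.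
-/

open MeasureTheory ProbabilityTheory
open scoped ENNReal

lemma EReal.coe_finset_sum {ι : Type*} (s : Finset ι) (f : ι → ℝ) :
    ((∑ j ∈ s, f j : ℝ) : EReal) = ∑ j ∈ s, (f j : EReal) :=
  map_sum (⟨⟨Real.toEReal, EReal.coe_zero⟩, EReal.coe_add⟩ : ℝ →+ EReal) f s

lemma EReal.exp_coe_mul_add_coe (γ e : ℝ) (s : EReal) :
    EReal.exp (γ * (s + e)) = EReal.exp (γ * s) * ENNReal.ofReal (Real.exp (γ * e)) := by
  have hpos : ENNReal.ofReal (Real.exp (γ * e)) ≠ 0 := (ENNReal.ofReal_pos.2 (Real.exp_pos _)).ne'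
  induction s using EReal.rec with
  | bot => rcases lt_trichotomy γ 0 with h | rfl | h <;>
      simp [EReal.coe_mul_bot_of_neg, EReal.coe_mul_bot_of_pos, *, ENNReal.top_mul hpos]
  | coe s => rw [← EReal.coe_add, ← EReal.coe_mul, ← EReal.coe_mul, EReal.exp_coe, EReal.exp_coe,
      ← ENNReal.ofReal_mul (Real.exp_pos _).le, ← Real.exp_add, mul_add]
  | top => rcases lt_trichotomy γ 0 with h | rfl | h <;>
      simp [EReal.coe_mul_top_of_neg, EReal.coe_mul_top_of_pos, *, ENNReal.top_mul hpos]

lemma EReal.lt_zero_of_exp_coe_mul_eq_top {γ : ℝ} {s : EReal} (hs : s ≠ ⊤)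
    (h : EReal.exp (γ * s) = ⊤) : γ < 0 := by
  rw [EReal.exp_eq_top_iff, EReal.mul_eq_top] at h
  exact (by simpa [hs] using h : γ < 0 ∧ s = ⊥).1

noncomputable def gpTransform (γ σ : ℝ) (s : EReal) (e : ℝ) : EReal :=
  (σ : EReal) * ((EReal.exp ((γ : EReal) * (s + (e : EReal))) : EReal) - 1) * ((γ⁻¹ : ℝ) : EReal)

lemma gpTransform_of_ne_top {γ σ : ℝ} {s : EReal} (e : ℝ) (h : EReal.exp (γ * s) ≠ ⊤) :
    gpTransform γ σ s e =
      ((σ * ((EReal.exp (γ * s)).toReal * Real.exp (γ * e) - 1) * γ⁻¹ : ℝ) : EReal) := by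
  rw [gpTransform, EReal.exp_coe_mul_add_coe, ← ENNReal.ofReal_toReal h,
    ← ENNReal.ofReal_mul ENNReal.toReal_nonneg, EReal.coe_ennreal_ofReal,
    max_eq_left (by positivity), ENNReal.toReal_ofReal ENNReal.toReal_nonneg]
  norm_cast

lemma gpTransform_of_exp_eq_top {γ σ : ℝ} (hσ : 0 < σ) {s : EReal} (hs : s ≠ ⊤) (e : ℝ)
    (h : EReal.exp (γ * s) = ⊤) : gpTransform γ σ s e = ⊥ := by
  have hγ := EReal.lt_zero_of_exp_coe_mul_eq_top hs h
  rw [gpTransform, EReal.exp_coe_mul_add_coe, h,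
    ENNReal.top_mul (ENNReal.ofReal_pos.2 (Real.exp_pos _)).ne',
    EReal.coe_ennreal_top, ← EReal.coe_one, EReal.top_sub_coe, EReal.coe_mul_top_of_pos hσ,
    EReal.top_mul_coe_of_neg (inv_lt_zero.2 hγ)]

lemma Real.sub_div_pos_iff_log_sub_div_pos {u v c : ℝ} (hu : 0 < u) (hv : 0 < v) :
    0 < (u - v) / c ↔ 0 < (Real.log u - Real.log v) / c := by
  simp only [div_pos_iff, sub_pos, sub_neg, Real.log_lt_log_iff hv hu, Real.log_lt_log_iff hu hv]

lemma one_add_mul_div_pos {γ b x : ℝ} (hb : 0 < b) (hv : 0 < b + γ * x) :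
    0 < 1 + γ * x / b := by
  rw [← div_self hb.ne', ← add_div]; exact div_pos (by linarith) hb

lemma lt_mul_exp_mul_sub_one_div_iff {γ b x e R : ℝ} (hγ : γ ≠ 0) (hb : 0 < b)
    (hv : 0 < b + γ * x) (hR : 0 < R) :
    x < b * (Real.exp (γ * e) * R - 1) / γ ↔
      Real.exp (-e) < (1 + γ * x / b) ^ (-γ⁻¹) * R ^ γ⁻¹ := by
  -- both sides say that `e^{γe} R - v` (equivalently `log (e^{γe} R) - log v`) has the sign of `γ`
  have hv' := one_add_mul_div_pos hb hv
  have hER : 0 < Real.exp (γ * e) * R := by positivity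
  rw [Real.rpow_def_of_pos hv', Real.rpow_def_of_pos hR, ← Real.exp_add, Real.exp_lt_exp,
    ← sub_pos, ← sub_pos (b := -e)]
  have h1 : b * (Real.exp (γ * e) * R - 1) / γ - x =
      b * ((Real.exp (γ * e) * R - (1 + γ * x / b)) / γ) := by
    field_simp; ring
  have h2 : Real.log (1 + γ * x / b) * -γ⁻¹ + Real.log R * γ⁻¹ - -e =
      (Real.log (Real.exp (γ * e) * R) - Real.log (1 + γ * x / b)) / γ := by
    rw [Real.log_mul (Real.exp_pos _).ne' hR.ne', Real.log_exp]
    field_simp; ring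
  rw [h1, h2, mul_pos_iff_of_pos_left hb, Real.sub_div_pos_iff_log_sub_div_pos hER hv']

lemma lt_mul_exp_mul_sub_one_div_iff_ennreal {γ b x e R : ℝ} (hγ : γ ≠ 0) (hb : 0 < b)
    (hv : 0 < b + γ * x) (hR : 0 ≤ R) :
    x < b * (Real.exp (γ * e) * R - 1) / γ ↔ ENNReal.ofReal (Real.exp (-e)) <
      ENNReal.ofReal ((1 + γ * x / b) ^ (-γ⁻¹)) * ENNReal.ofReal R ^ γ⁻¹ := by
  rcases hR.eq_or_lt with rfl | hR
  · rcases hγ.lt_or_gt with hγ | hγ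
    · have hc : ENNReal.ofReal ((1 + γ * x / b) ^ (-γ⁻¹)) ≠ 0 :=
        (ENNReal.ofReal_pos.2 (Real.rpow_pos_of_pos (one_add_mul_div_pos hb hv) _)).ne'
      rw [ENNReal.ofReal_zero, ENNReal.zero_rpow_of_neg (inv_lt_zero.2 hγ), ENNReal.mul_top hc,
        mul_zero, zero_sub, lt_div_iff_of_neg hγ]
      simpa using by linarith
    · rw [ENNReal.ofReal_zero, ENNReal.zero_rpow_of_pos (inv_pos.2 hγ), mul_zero, mul_zero,
        zero_sub, lt_div_iff₀ hγ]
      simpa using by linarith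
  · have hc := Real.rpow_pos_of_pos (one_add_mul_div_pos hb hv) (-γ⁻¹)
    rw [ENNReal.ofReal_rpow_of_pos hR, ← ENNReal.ofReal_mul hc.le,
      ENNReal.ofReal_lt_ofReal_iff (by positivity), lt_mul_exp_mul_sub_one_div_iff hγ hb hv hR]

theorem coe_lt_sum_mul_gpTransform_iff {ι : Type*} [Fintype ι] {γ : ℝ} (hγ : γ ≠ 0)
    {σ α : ι → ℝ} (hσ : ∀ j, 0 < σ j) (hα : ∀ j, 0 ≤ α j) (hb : 0 < ∑ j, α j * σ j)
    {s : ι → EReal} (hs : ∀ j, s j ≠ ⊤) (e x : ℝ) (hv : 0 < (∑ j, α j * σ j) + γ * x) :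
    (x : EReal) < ∑ j, (α j : EReal) * gpTransform γ (σ j) (s j) e ↔
      ENNReal.ofReal (Real.exp (-e)) <
        ENNReal.ofReal ((1 + γ * x / ∑ j, α j * σ j) ^ (-γ⁻¹)) *
          (∑ j, ENNReal.ofReal (α j * σ j / ∑ k, α k * σ k) * EReal.exp (γ * s j)) ^ γ⁻¹ := by
  set b := ∑ j, α j * σ j with hb_def
  by_cases hinf : ∃ j, α j ≠ 0 ∧ EReal.exp (γ * s j) = ⊤
  · -- an infinite term forces `γ < 0`: the sum is then `⊥` and the mixture `⊤ ^ γ⁻¹ = 0`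
    obtain ⟨j, hαj, hexp⟩ := hinf
    have hαj : 0 < α j := (hα j).lt_of_ne' hαj
    have hsum : ∑ j, (α j : EReal) * gpTransform γ (σ j) (s j) e = ⊥ :=
      WithBot.sum_eq_bot_iff.2 ⟨j, Finset.mem_univ j, by
        rw [gpTransform_of_exp_eq_top (hσ j) (hs j) e hexp, EReal.coe_mul_bot_of_pos hαj]; rfl⟩
    have hW : ∑ j, ENNReal.ofReal (α j * σ j / b) * EReal.exp (γ * s j) = ⊤ :=
      ENNReal.sum_eq_top.2 ⟨j, Finset.mem_univ j, by
        rw [hexp]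
        exact ENNReal.mul_top (ENNReal.ofReal_pos.2 (div_pos (mul_pos hαj (hσ j)) hb)).ne'⟩
    have hγ := EReal.lt_zero_of_exp_coe_mul_eq_top (hs j) hexp
    rw [hsum, hW, ENNReal.top_rpow_of_neg (inv_lt_zero.2 hγ)]
    simp
  push Not at hinf
  set t : ι → ℝ := fun j => (EReal.exp (γ * s j)).toReal
  have hterm : ∀ j, (α j : EReal) * gpTransform γ (σ j) (s j) e =
      ((α j * (σ j * (t j * Real.exp (γ * e) - 1) * γ⁻¹) : ℝ) : EReal) := by
    intro j
    by_cases hαj : α j = 0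
    · simp [hαj]
    · rw [gpTransform_of_ne_top e (hinf j hαj), ← EReal.coe_mul]
  have hweight : ∀ j, ENNReal.ofReal (α j * σ j / b) * EReal.exp (γ * s j) =
      ENNReal.ofReal (α j * σ j / b * t j) := by
    intro j
    by_cases hαj : α j = 0
    · simp [hαj]
    · rw [ENNReal.ofReal_mul (div_nonneg (mul_nonneg (hα j) (hσ j).le) hb.le),
        ENNReal.ofReal_toReal (hinf j hαj)]
  have hlin : ∑ j, α j * (σ j * (t j * Real.exp (γ * e) - 1) * γ⁻¹) =
      b * (Real.exp (γ * e) * ∑ j, α j * σ j / b * t j - 1) / γ := by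
    have hbt : b * ∑ j, α j * σ j / b * t j = ∑ j, α j * σ j * t j := by
      rw [Finset.mul_sum]; exact Finset.sum_congr rfl fun j _ => by field_simp
    rw [mul_sub, ← mul_assoc, mul_comm b, mul_assoc, hbt, mul_one, Finset.mul_sum, hb_def,
      ← Finset.sum_sub_distrib, Finset.sum_div]
    exact Finset.sum_congr rfl fun j _ => by ring
  rw [Finset.sum_congr rfl fun j _ => hterm j, ← EReal.coe_finset_sum, hlin, EReal.coe_lt_coe_iff,
    Finset.sum_congr rfl fun j _ => hweight j, ← ENNReal.ofReal_sum_of_nonneg fun j _ =>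
      mul_nonneg (div_nonneg (mul_nonneg (hα j) (hσ j).le) hb.le) ENNReal.toReal_nonneg]
  exact lt_mul_exp_mul_sub_one_div_iff_ennreal hγ hb hv (Finset.sum_nonneg fun j _ =>
    mul_nonneg (div_nonneg (mul_nonneg (hα j) (hσ j).le) hb.le) ENNReal.toReal_nonneg)

theorem measure_prodMk_mem_eq_lintegral_of_indepFun {Ω α β : Type*} [MeasurableSpace Ω]
    [MeasurableSpace α] [MeasurableSpace β] {μ : Measure Ω} [IsFiniteMeasure μ]
    {S : Ω → α} {Y : Ω → β} (hS : Measurable S) (hY : Measurable Y) (hSY : IndepFun S Y μ)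
    {B : Set (α × β)} (hB : MeasurableSet B) :
    μ {ω | (S ω, Y ω) ∈ B} = ∫⁻ ω, μ {ω' | (S ω, Y ω') ∈ B} ∂μ := by
  have hmap := (indepFun_iff_map_prod_eq_prod_map_map hS.aemeasurable hY.aemeasurable).1 hSY
  calc μ {ω | (S ω, Y ω) ∈ B} = μ.map (fun ω => (S ω, Y ω)) B :=
        (Measure.map_apply (hS.prodMk hY) hB).symm
    _ = ∫⁻ s, μ.map Y (Prod.mk s ⁻¹' B) ∂μ.map S := by rw [hmap, Measure.prod_apply hB]
    _ = ∫⁻ ω, μ {ω' | (S ω, Y ω') ∈ B} ∂μ := by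
        rw [lintegral_map (measurable_measure_prodMk_left hB) hS]
        exact lintegral_congr fun ω => Measure.map_apply hY (measurable_prodMk_left hB)

section ExponentialTail

variable {Ω : Type*} [MeasurableSpace Ω] {μ : Measure Ω} [IsProbabilityMeasure μ] {E : Ω → ℝ}

theorem measure_lt_eq_min_one_exp_neg
    (hE : ∀ t : ℝ, 0 ≤ t → μ {ω | t < E ω} = ENNReal.ofReal (Real.exp (-t))) (t : ℝ) :
    μ {ω | t < E ω} = min 1 (ENNReal.ofReal (Real.exp (-t))) := by
  rcases le_or_gt 0 t with ht | ht
  · rw [hE t ht, min_eq_right (ENNReal.ofReal_le_one.2 (Real.exp_le_one_iff.2 (by linarith)))]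
  · have hpos : μ {ω | 0 < E ω} = 1 := by simpa using hE 0 le_rfl
    rw [min_eq_left (ENNReal.one_le_ofReal.2 (Real.one_le_exp (by linarith)))]
    exact le_antisymm prob_le_one (hpos ▸ measure_mono fun ω (hω : 0 < E ω) => ht.trans hω)

theorem measure_ofReal_exp_neg_lt
    (hE : ∀ t : ℝ, 0 ≤ t → μ {ω | t < E ω} = ENNReal.ofReal (Real.exp (-t))) (u : ℝ≥0∞) :
    μ {ω | ENNReal.ofReal (Real.exp (-E ω)) < u} = min 1 u := by
  rcases eq_or_ne u ⊤ with rfl | hu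
  · simp
  rcases eq_or_ne u 0 with rfl | hu0
  · simp
  have hr : 0 < u.toReal := ENNReal.toReal_pos hu0 hu
  have hset : {ω | ENNReal.ofReal (Real.exp (-E ω)) < u} = {ω | -Real.log u.toReal < E ω} := by
    ext ω
    exact (ENNReal.ofReal_lt_iff_lt_toReal (Real.exp_pos _).le hu).trans
      ((Real.lt_log_iff_exp_lt hr).symm.trans neg_lt)
  rw [hset, measure_lt_eq_min_one_exp_neg hE, neg_neg, Real.exp_log hr, ENNReal.ofReal_toReal hu]

end ExponentialTail

theorem gp_linear_combination_general
    {Ω : Type*} [MeasurableSpace Ω] (μ : Measure Ω) [IsProbabilityMeasure μ]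
    {d m : ℕ}
    (γ : ℝ) (hγ : γ ≠ 0) (σ : Fin d → ℝ) (hσ : ∀ j, 0 < σ j)
    (a : Fin m → Fin d → ℝ) (ha : ∀ i j, 0 ≤ a i j)
    (haσ : ∀ i, 0 < ∑ j, a i j * σ j)
    (S : Ω → Fin d → EReal) (E : Ω → ℝ)
    (hSmeas : Measurable S) (hEmeas : Measurable E)
    (hSle : ∀ ω j, S ω j ≤ 0)
    (hE : ∀ t : ℝ, 0 ≤ t → μ {ω | t < E ω} = ENNReal.ofReal (Real.exp (-t)))
    (hindep : IndepFun S E μ)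
    (X : Ω → Fin d → EReal)
    (hX : ∀ ω j, X ω j =
      (σ j : EReal) *
        (((EReal.exp ((γ : EReal) * (S ω j + (E ω : EReal)))) : EReal) - 1) *
        ((γ⁻¹ : ℝ) : EReal))
    (U : Fin m → Ω → EReal)
    (hU : ∀ i ω, U i ω = ((γ⁻¹ : ℝ) : EReal) *
      ENNReal.log (∑ j, ENNReal.ofReal (a i j * σ j / ∑ k, a i k * σ k) *
        EReal.exp ((γ : EReal) * S ω j)))
    (x : Fin m → ℝ) (hx : ∀ i, 0 < (∑ j, a i j * σ j) + γ * x i) :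
    μ {ω | ∃ i, (x i : EReal) < ∑ j, (a i j : EReal) * X ω j} =
      ∫⁻ ω, min 1 (⨆ i,
        ENNReal.ofReal ((1 + γ * x i / ∑ j, a i j * σ j) ^ (-γ⁻¹)) *
          EReal.exp (U i ω)) ∂μ := by
  have hX' : ∀ ω j, X ω j = gpTransform γ (σ j) (S ω j) (E ω) := hX
  set Z : (Fin d → EReal) → ℝ≥0∞ := fun s => ⨆ i,
    ENNReal.ofReal ((1 + γ * x i / ∑ j, a i j * σ j) ^ (-γ⁻¹)) *
      (∑ j, ENNReal.ofReal (a i j * σ j / ∑ k, a i k * σ k) * EReal.exp (γ * s j)) ^ γ⁻¹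
  set Y : Ω → ℝ≥0∞ := fun ω => ENNReal.ofReal (Real.exp (-E ω))
  have hevent : {ω | ∃ i, (x i : EReal) < ∑ j, (a i j : EReal) * X ω j} =
      {ω | (S ω, Y ω) ∈ {p | p.2 < Z p.1}} := by
    ext ω
    simp only [hX']
    exact (exists_congr fun i => coe_lt_sum_mul_gpTransform_iff hγ hσ (ha i) (haσ i)
      (fun j => ((hSle ω j).trans_lt EReal.zero_lt_top).ne) (E ω) (x i) (hx i)).trans
      lt_iSup_iff.symm
  have hY : IndepFun S Y μ := hindep.comp measurable_id
    (show Measurable fun e : ℝ => ENNReal.ofReal (Real.exp (-e)) by fun_prop)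
  have hB : MeasurableSet {p : (Fin d → EReal) × ℝ≥0∞ | p.2 < Z p.1} :=
    measurableSet_lt measurable_snd (by fun_prop)
  rw [hevent, measure_prodMk_mem_eq_lintegral_of_indepFun hSmeas (by fun_prop) hY hB]
  refine lintegral_congr fun ω => ?_
  simp only [hU, ← ENNReal.rpow_eq_exp_mul_log]
  exact measure_ofReal_exp_neg_lt hE (Z (S ω))

/-- Linear combinations of a GP random vector with equal shape parameters `γ ≠ 0`:
with `X_j = σ_j (e^{γ(S_j+E)} - 1)/γ` for a spectral random vector `S` and independent
unit exponential `E`, and a nonnegative matrix `A` with `A_i σ > 0`, for `x` with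
`A_i σ + γ x_i > 0` for all `i`,
`P[AX ≰ x] = E[min(1, max_i (1 + γ x_i / A_i σ)^{-1/γ} e^{U_i})]`
where `U_i = γ⁻¹ log(∑_j p_{ij} e^{γ S_j})` and `p_{ij} = a_{ij} σ_j / A_i σ`. -/
theorem gp_linear_combination
    {Ω : Type*} [MeasurableSpace Ω] (μ : Measure Ω) [IsProbabilityMeasure μ]
    {d m : ℕ} (hd : 0 < d) (hm : 0 < m)
    (γ : ℝ) (hγ : γ ≠ 0) (σ : Fin d → ℝ) (hσ : ∀ j, 0 < σ j)
    (a : Fin m → Fin d → ℝ) (ha : ∀ i j, 0 ≤ a i j)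
    (haσ : ∀ i, 0 < ∑ j, a i j * σ j)
    (S : Ω → Fin d → EReal) (E : Ω → ℝ)
    (hSmeas : Measurable S) (hEmeas : Measurable E)
    (hSle : ∀ ω j, S ω j ≤ 0)
    (hSmax : ∀ᵐ ω ∂μ, (⨆ j, S ω j) = 0)
    (hSbot : ∀ j, 0 < μ {ω | ⊥ < S ω j})
    (hE : ∀ t : ℝ, 0 ≤ t → μ {ω | t < E ω} = ENNReal.ofReal (Real.exp (-t)))
    (hindep : IndepFun S E μ)
    (X : Ω → Fin d → EReal)
    (hX : ∀ ω j, X ω j =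
      (σ j : EReal) *
        (((EReal.exp ((γ : EReal) * (S ω j + (E ω : EReal)))) : EReal) - 1) *
        ((γ⁻¹ : ℝ) : EReal))
    (U : Fin m → Ω → EReal)
    (hU : ∀ i ω, U i ω = ((γ⁻¹ : ℝ) : EReal) *
      ENNReal.log (∑ j, ENNReal.ofReal (a i j * σ j / ∑ k, a i k * σ k) *
        EReal.exp ((γ : EReal) * S ω j)))
    (x : Fin m → ℝ) (hx : ∀ i, 0 < (∑ j, a i j * σ j) + γ * x i) :
    μ {ω | ∃ i, (x i : EReal) < ∑ j, (a i j : EReal) * X ω j} =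
      ∫⁻ ω, min 1 (⨆ i,
        ENNReal.ofReal ((1 + γ * x i / ∑ j, a i j * σ j) ^ (-γ⁻¹)) *
          EReal.exp (U i ω)) ∂μ :=
  gp_linear_combination_general μ γ hγ σ hσ a ha haσ S E hSmeas hEmeas hSle hE hindep X hX U hU x hx
end

section
/- Let $U$ be a random vector with $0 < E[e^{U_j}] < \infty$ for all $j$ and Lebesgue density $f_U$ on $\mathbb{R}^d$. Then for $z \in \mathbb{R}^d$: $E[e^{\max(U - (z \wedge 0))}] - E[e^{\max(U - z)}] = \int_{v \le z} \mathbf{1}(v \not\le 0) \int_0^\infty f_U(v + \log t)\, dt\, dv$, where $v + \log t$ adds the scalar $\log t$ to all components and $v \le z$, $v \not\le 0$ are componentwise. -/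
/-!
By the layer-cake formula, `E[e^X] = ∫_0^∞ P(X > log t) dt`. For `X₀ = max(U - z ∧ 0)` and
`X_z = max(U - z)` we have `X_z ≤ X₀`, so the difference of the two expectations is
`∫_0^∞ P(X_z ≤ log t < X₀) dt`, and `X_z ≤ s < X₀` holds exactly when `U - s ≤ z` and
`U - s ≰ 0`. The density of `U` and the translation invariance of Lebesgue measure turn this
probability into `∫_{v ≤ z, v ≰ 0} f_U(v + log t) dv`, and Tonelli exchanges the integrals.
Integrability of the `e^{U_j}` keeps every quantity finite, so the identity, first proved for
lower Lebesgue integrals, transfers to Bochner integrals.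
-/

open MeasureTheory Set Real
open scoped ENNReal

theorem iSup_sub_le_and_lt_iSup_sub_min_zero_iff {ι : Type*} [Finite ι] [Nonempty ι]
    (u z : ι → ℝ) (s : ℝ) :
    (⨆ j, (u j - z j)) ≤ s ∧ s < ⨆ j, (u j - min (z j) 0) ↔
      (∀ j, u j - s ≤ z j) ∧ ∃ j, 0 < u j - s := by
  rw [ciSup_le_iff (Finite.bddAbove_range _), lt_ciSup_iff (Finite.bddAbove_range _)]
  constructor
  · rintro ⟨hle, j, hj⟩
    refine ⟨fun k => by linarith [hle k], j, ?_⟩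
    rcases min_cases (z j) 0 with ⟨h, -⟩ | ⟨h, -⟩ <;> rw [h] at hj <;> linarith [hle j]
  · rintro ⟨hle, j, hj⟩
    exact ⟨fun k => by linarith [hle k], j, by linarith [min_le_right (z j) 0]⟩

section Expectations

variable {Ω : Type*} [MeasurableSpace Ω] {μ : Measure Ω}

theorem lintegral_ofReal_exp_eq_lintegral_meas_log_lt {f : Ω → ℝ} (hf : Measurable f) :
    ∫⁻ ω, ENNReal.ofReal (exp (f ω)) ∂μ = ∫⁻ t in Ioi 0, μ {ω | log t < f ω} := by
  rw [lintegral_eq_lintegral_meas_lt μ (ae_of_all _ fun ω => (exp_pos _).le)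
    hf.exp.aemeasurable]
  refine setLIntegral_congr_fun measurableSet_Ioi fun t ht => ?_
  simp_rw [log_lt_iff_lt_exp ht]

theorem lintegral_ofReal_exp_sub_lintegral_ofReal_exp [SFinite μ] {f g : Ω → ℝ}
    (hf : Measurable f) (hg : Measurable g) (hfg : f ≤ g)
    (hfin : ∫⁻ ω, ENNReal.ofReal (exp (f ω)) ∂μ ≠ ∞) :
    ∫⁻ ω, ENNReal.ofReal (exp (g ω)) ∂μ - ∫⁻ ω, ENNReal.ofReal (exp (f ω)) ∂μ =
      ∫⁻ t in Ioi 0, μ {ω | f ω ≤ log t ∧ log t < g ω} := by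
  have hsplit : ∀ t, μ {ω | log t < g ω} =
      μ {ω | f ω ≤ log t ∧ log t < g ω} + μ {ω | log t < f ω} := fun t => by
    rw [← measure_union _ (measurableSet_lt measurable_const hf)]
    · congr 1
      ext ω
      rcases le_or_gt (f ω) (log t) with h | h
      · simp [h, h.not_gt]
      · simp [h, h.trans_le (hfg ω)]
    · exact disjoint_left.2 fun ω h h' => not_le.2 h' h.1
  have hmeas : Measurable fun t : ℝ => μ {ω | log t < f ω} :=
    measurable_measure_prodMk_left
      (measurableSet_lt (measurable_log.comp measurable_fst) (hf.comp measurable_snd))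
  rw [lintegral_ofReal_exp_eq_lintegral_meas_log_lt hf] at hfin ⊢
  rw [lintegral_ofReal_exp_eq_lintegral_meas_log_lt hg, ENNReal.sub_eq_of_eq_add hfin]
  simp_rw [hsplit]
  exact lintegral_add_right _ hmeas

theorem measure_sub_const_mem_eq_setLIntegral {E : Type*} [MeasurableSpace E] [AddGroup E]
    [MeasurableAdd E] [MeasurableSub E] {ν : Measure E} [ν.IsAddRightInvariant] {U : Ω → E}
    (hU : Measurable U) {ρ : E → ℝ≥0∞} (hρ : μ.map U = ν.withDensity ρ) {T : Set E}
    (hT : MeasurableSet T) (c : E) :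
    μ {ω | U ω - c ∈ T} = ∫⁻ v in T, ρ (v + c) ∂ν := by
  have hTc : MeasurableSet ((· - c) ⁻¹' T) := measurable_sub_const c hT
  rw [show {ω | U ω - c ∈ T} = U ⁻¹' ((· - c) ⁻¹' T) from rfl, ← Measure.map_apply hU hTc,
    hρ, withDensity_apply _ hTc,
    ← (measurePreserving_add_right ν c).setLIntegral_comp_preimage_emb
      (measurableEmbedding_addRight c)]
  simp only [preimage_preimage, add_sub_cancel_right, preimage_id']

theorem integrable_exp_iSup_sub {ι : Type*} [Fintype ι] [Nonempty ι] {X : Ω → ι → ℝ}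
    (hX : Measurable X) (hint : ∀ j, Integrable (fun ω => exp (X ω j)) μ) (w : ι → ℝ) :
    Integrable (fun ω => exp (⨆ j, (X ω j - w j))) μ := by
  have hmeas : Measurable fun ω => ⨆ j, (X ω j - w j) :=
    Measurable.iSup fun j => (measurable_pi_apply j |>.comp hX).sub_const _
  refine (integrable_finsetSum Finset.univ fun j _ => (hint j).const_mul (exp (-w j))).mono'
    hmeas.exp.aestronglyMeasurable (ae_of_all _ fun ω => ?_)
  obtain ⟨j, hj⟩ := exists_eq_ciSup_of_finite (f := fun j => X ω j - w j)
  rw [Real.norm_of_nonneg (exp_pos _).le, ← hj, sub_eq_neg_add, exp_add]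
  exact Finset.single_le_sum (f := fun j => exp (-w j) * exp (X ω j))
    (fun j _ => by positivity) (Finset.mem_univ j)

theorem integral_sub_integral_eq_toReal_lintegral_sub {f g : Ω → ℝ} (hf : Integrable f μ)
    (hg : Integrable g μ) (hf0 : 0 ≤ᵐ[μ] f) (hfg : f ≤ᵐ[μ] g) :
    ∫ ω, g ω ∂μ - ∫ ω, f ω ∂μ =
      (∫⁻ ω, ENNReal.ofReal (g ω) ∂μ - ∫⁻ ω, ENNReal.ofReal (f ω) ∂μ).toReal := by
  have hg0 : 0 ≤ᵐ[μ] g := by filter_upwards [hf0, hfg] with ω h h' using h.trans h'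
  rw [integral_eq_lintegral_of_nonneg_ae hf0 hf.aestronglyMeasurable,
    integral_eq_lintegral_of_nonneg_ae hg0 hg.aestronglyMeasurable,
    ENNReal.toReal_sub_of_le (lintegral_mono_ae (hfg.mono fun _ => ENNReal.ofReal_le_ofReal))
      hg.lintegral_lt_top.ne]

end Expectations

theorem integral_integral_eq_toReal_lintegral_lintegral {α β : Type*} [MeasurableSpace α]
    [MeasurableSpace β] {μ : Measure α} {ν : Measure β} [SFinite ν] {F : α → β → ℝ}
    (hF : Measurable (Function.uncurry F)) (hF0 : ∀ a b, 0 ≤ F a b)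
    (hfin : ∫⁻ a, ∫⁻ b, ENNReal.ofReal (F a b) ∂ν ∂μ ≠ ∞) :
    ∫ a, ∫ b, F a b ∂ν ∂μ = (∫⁻ a, ∫⁻ b, ENNReal.ofReal (F a b) ∂ν ∂μ).toReal := by
  have hinner : Measurable fun a => ∫⁻ b, ENNReal.ofReal (F a b) ∂ν :=
    hF.ennreal_ofReal.lintegral_prod_right
  rw [← integral_toReal hinner.aemeasurable (ae_lt_top hinner hfin)]
  refine integral_congr_ae (ae_of_all _ fun a => ?_)
  exact integral_eq_lintegral_of_nonneg_ae (ae_of_all _ (hF0 a))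
    (hF.comp measurable_prodMk_left).aestronglyMeasurable

theorem gpU_density_identity_general
    {Ω : Type*} [MeasurableSpace Ω] (μ : Measure Ω) [IsProbabilityMeasure μ]
    {d : ℕ} (hd : 0 < d)
    (U : Ω → Fin d → ℝ) (hUmeas : Measurable U)
    (fU : (Fin d → ℝ) → ℝ) (hfU : Measurable fU) (hfUnn : ∀ u, 0 ≤ fU u)
    (hdens : μ.map U = volume.withDensity (fun u => ENNReal.ofReal (fU u)))
    (hint : ∀ j, Integrable (fun ω => Real.exp (U ω j)) μ)
    (z : Fin d → ℝ) :
    (∫ ω, Real.exp (⨆ j, (U ω j - min (z j) 0)) ∂μ)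
        - ∫ ω, Real.exp (⨆ j, (U ω j - z j)) ∂μ =
      ∫ v in {v : Fin d → ℝ | (∀ j, v j ≤ z j) ∧ ∃ j, 0 < v j},
        (∫ t in Set.Ioi (0 : ℝ), fU (fun j => v j + Real.log t)) ∂volume := by
  have : Nonempty (Fin d) := ⟨⟨0, hd⟩⟩
  set T := {v : Fin d → ℝ | (∀ j, v j ≤ z j) ∧ ∃ j, 0 < v j}
  have hT : MeasurableSet T := measurableSet_setOfPred.2 (by fun_prop)
  have hmax : ∀ w : Fin d → ℝ, Measurable fun ω => ⨆ j, (U ω j - w j) := fun w =>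
    Measurable.iSup fun j => (measurable_pi_apply j |>.comp hUmeas).sub_const _
  have hle : ∀ ω, ⨆ j, (U ω j - z j) ≤ ⨆ j, (U ω j - min (z j) 0) := fun ω =>
    ciSup_mono (Finite.bddAbove_range _) fun j => by linarith [min_le_left (z j) 0]
  have hF : Measurable (Function.uncurry fun (v : Fin d → ℝ) (t : ℝ) =>
      fU (fun j => v j + Real.log t)) := hfU.comp (by fun_prop)
  have key : ∫⁻ ω, ENNReal.ofReal (exp (⨆ j, (U ω j - min (z j) 0))) ∂μ
        - ∫⁻ ω, ENNReal.ofReal (exp (⨆ j, (U ω j - z j))) ∂μ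
      = ∫⁻ v in T, ∫⁻ t in Ioi 0, ENNReal.ofReal (fU (fun j => v j + Real.log t)) := by
    rw [lintegral_ofReal_exp_sub_lintegral_ofReal_exp (hmax _) (hmax _) hle
      (integrable_exp_iSup_sub hUmeas hint z).lintegral_lt_top.ne,
      lintegral_lintegral_swap hF.ennreal_ofReal.aemeasurable]
    refine setLIntegral_congr_fun measurableSet_Ioi fun t _ => ?_
    simp_rw [iSup_sub_le_and_lt_iSup_sub_min_zero_iff]
    exact measure_sub_const_mem_eq_setLIntegral hUmeas hdens hT fun _ => Real.log t
  have hfin :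
      ∫⁻ v in T, ∫⁻ t in Ioi 0, ENNReal.ofReal (fU (fun j => v j + Real.log t)) ≠ ∞ :=
    key ▸ (tsub_le_self.trans_lt (integrable_exp_iSup_sub hUmeas hint _).lintegral_lt_top).ne
  rw [integral_sub_integral_eq_toReal_lintegral_sub (integrable_exp_iSup_sub hUmeas hint _)
    (integrable_exp_iSup_sub hUmeas hint _) (ae_of_all _ fun _ => (exp_pos _).le)
    (ae_of_all _ fun ω => exp_le_exp.2 (hle ω)), key,
    integral_integral_eq_toReal_lintegral_lintegral hF (fun _ _ => hfUnn _) hfin]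

/-- Key identity in the computation of the `GP_U` density: if `U` has Lebesgue density
`f_U` on `ℝ^d` and `0 < E[e^{U_j}] < ∞` for all `j`, then for every `z ∈ ℝ^d`,
`E[e^{max(U - (z ∧ 0))}] - E[e^{max(U - z)}]
  = ∫_{v ≤ z, v ≰ 0} ∫_0^∞ f_U(v + log t) dt dv`. -/
theorem gpU_density_identity
    {Ω : Type*} [MeasurableSpace Ω] (μ : Measure Ω) [IsProbabilityMeasure μ]
    {d : ℕ} (hd : 0 < d)
    (U : Ω → Fin d → ℝ) (hUmeas : Measurable U)
    (fU : (Fin d → ℝ) → ℝ) (hfU : Measurable fU) (hfUnn : ∀ u, 0 ≤ fU u)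
    (hdens : μ.map U = volume.withDensity (fun u => ENNReal.ofReal (fU u)))
    (hint : ∀ j, Integrable (fun ω => Real.exp (U ω j)) μ)
    (hpos : ∀ j, 0 < ∫ ω, Real.exp (U ω j) ∂μ)
    (z : Fin d → ℝ) :
    (∫ ω, Real.exp (⨆ j, (U ω j - min (z j) 0)) ∂μ)
        - ∫ ω, Real.exp (⨆ j, (U ω j - z j)) ∂μ =
      ∫ v in {v : Fin d → ℝ | (∀ j, v j ≤ z j) ∧ ∃ j, 0 < v j},
        (∫ t in Set.Ioi (0 : ℝ), fU (fun j => v j + Real.log t)) ∂volume :=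
  gpU_density_identity_general μ hd U hUmeas fU hfU hfUnn hdens hint z
end
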